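/- Let λ ∈ ℂ. A bounded sequence v = (v(n))_{n≥0} of complex numbers satisfies Σ_m s(n,m) v(m) = λ v(n) for every n ≥ 0 if and only if v(n) = v(0) · v_λ(n) for every n ≥ 0, where v_λ(n) = Π_{r≥1} ι_λ(r)^{a_r(n)}. -/

import Mathlib

open Filter Finset
open scoped ENNReal Topology ZeroAtInfty

noncomputable section

namespace AMFC

/-- `q d j = d 0 * d 1 * ... * d j`. -/
def q (d : ℕ → ℕ) (j : ℕ) : ℕ := ∏ i ∈ Finset.range (j + 1), d i

/-- For `j ≥ 1`, `digit d n j = ⌊n / q_{j-1}⌋ mod d_j` is the `j`-th digit of `n`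
in the Cantor system of numeration. -/
def digit (d : ℕ → ℕ) (n j : ℕ) : ℕ := (n / q d (j - 1)) % d j

/-- The counter `ζ_n = min { j ≥ 1 : a_j(n) ≠ d_j - 1 }`. -/
def zeta (d : ℕ → ℕ) (n : ℕ) : ℕ := sInf {j | 1 ≤ j ∧ digit d n j ≠ d j - 1}

open scoped Classical in
/-- The transition probabilities of the stochastic adding machine. -/
def s (d : ℕ → ℕ) (p : ℕ → ℝ) (n m : ℕ) : ℝ :=
  if m = n + 1 then ∏ j ∈ Finset.Icc 1 (zeta d n), p j
  else if m = n then 1 - p 1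
  else if h : ∃ r, 1 ≤ r ∧ r + 1 ≤ zeta d n ∧
      n = m + ∑ j ∈ Finset.Icc 1 r, (d j - 1) * q d (j - 1)
    then (1 - p (h.choose + 1)) * ∏ j ∈ Finset.Icc 1 h.choose, p j
  else 0

/-- `f j (z) = ((z - (1 - p j)) / p j) ^ (d j)`. -/
def f (d : ℕ → ℕ) (p : ℕ → ℝ) (j : ℕ) (z : ℂ) : ℂ :=
  ((z - (1 - (p j : ℂ))) / (p j : ℂ)) ^ d j

/-- `ftil j = f j ∘ ... ∘ f 1`, with `ftil 0 = id`. -/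
def ftil (d : ℕ → ℕ) (p : ℕ → ℝ) : ℕ → ℂ → ℂ
  | 0 => id
  | j + 1 => f d p (j + 1) ∘ ftil d p j

/-- The fibered filled Julia set `E = {z : limsup_j |ftil j z| < ∞}`. -/
def E (d : ℕ → ℕ) (p : ℕ → ℝ) : Set ℂ :=
  {z | Filter.limsup (fun j => (‖ftil d p j z‖₊ : ℝ≥0∞)) Filter.atTop < ⊤}

/-- `ι_λ(r) = (ftil (r-1) λ - (1 - p r)) / p r` for `r ≥ 1`. -/
def iota (d : ℕ → ℕ) (p : ℕ → ℝ) (lam : ℂ) (r : ℕ) : ℂ :=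
  (ftil d p (r - 1) lam - (1 - (p r : ℂ))) / (p r : ℂ)

/-- `v_λ(n) = ∏_{r ≥ 1} ι_λ(r) ^ a_r(n)`, a finite product. -/
def vlam (d : ℕ → ℕ) (p : ℕ → ℝ) (lam : ℂ) (n : ℕ) : ℂ :=
  ∏ᶠ r : ℕ, iota d p lam (r + 1) ^ digit d n (r + 1)

/-- The point spectrum of a continuous linear operator. -/
def pointSpectrum {M : Type*} [NormedAddCommGroup M] [NormedSpace ℂ M]
    (T : M →L[ℂ] M) : Set ℂ :=
  {lam | ∃ v, v ≠ 0 ∧ T v = lam • v}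

/-- The residual spectrum: `T - λI` is injective but its range is not dense. -/
def residualSpectrum {M : Type*} [NormedAddCommGroup M] [NormedSpace ℂ M]
    (T : M →L[ℂ] M) : Set ℂ :=
  {lam | Function.Injective ⇑(T - lam • (1 : M →L[ℂ] M)) ∧
    ¬ DenseRange ⇑(T - lam • (1 : M →L[ℂ] M))}

/-- The continuous spectrum: `T - λI` is injective with dense range, but not surjective. -/
def continuousSpectrum {M : Type*} [NormedAddCommGroup M] [NormedSpace ℂ M]
    (T : M →L[ℂ] M) : Set ℂ :=
  {lam | Function.Injective ⇑(T - lam • (1 : M →L[ℂ] M)) ∧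
    DenseRange ⇑(T - lam • (1 : M →L[ℂ] M)) ∧
    Set.range ⇑(T - lam • (1 : M →L[ℂ] M)) ≠ Set.univ}

/-!
Row `n` of `S` involves `w (n + 1)` with the coefficient `p₁ ⋯ p_{ζ_n} ≠ 0` and otherwise only
the earlier values `w (n + 1 - q_r)`, `r < ζ_n` (the term `r = 0` being `w n`), so a solution of
`S w = λ w` is determined by `w 0`. It remains to see that `v_λ` is a solution. The digits of
`n`, `n + 1` and `n + 1 - q_r` agree above position `ζ_n`, so after dividing out the common
factor the equation becomes an identity in `ι_λ(1), …, ι_λ(ζ_n)` alone; it follows by induction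
on `ζ_n` from `p_r ι_λ(r) + 1 - p_r = f̃_{r-1}(λ) = ι_λ(r-1) ^ d_{r-1}`.
-/

lemma add_one_mod_eq_ite {m k : ℕ} (hk : 0 < k) :
    (m + 1) % k = if m % k = k - 1 then 0 else m % k + 1 := by
  have hlt := Nat.mod_lt m hk
  rw [← Nat.mod_add_mod]
  split_ifs with h
  · rw [h, Nat.sub_add_cancel hk, Nat.mod_self]
  · exact Nat.mod_eq_of_lt (by omega)

lemma prod_range_succ_eq_prod_Ioc {M : Type*} [CommMonoid M] (f : ℕ → M) (N : ℕ) :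
    ∏ r ∈ range N, f (r + 1) = ∏ j ∈ Ioc 0 N, f j := by
  induction N with
  | zero => simp
  | succ N ih => rw [prod_range_succ, ih, prod_Ioc_succ_top N.zero_le]

section Cantor

variable {d : ℕ → ℕ}

lemma d_pos (hd0 : d 0 = 1) (hd : ∀ j, 1 ≤ j → 2 ≤ d j) (i : ℕ) : 0 < d i := by
  rcases i with _ | i
  · simp [hd0]
  · have := hd (i + 1) (by omega)
    omega

lemma q_zero (hd0 : d 0 = 1) : q d 0 = 1 := by simp [q, hd0]

lemma q_succ (j : ℕ) : q d (j + 1) = q d j * d (j + 1) := prod_range_succ _ _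

lemma q_pos (hd : ∀ i, 0 < d i) (j : ℕ) : 0 < q d j := prod_pos fun i _ => hd i

lemma q_dvd_q {i j : ℕ} (h : i ≤ j) : q d i ∣ q d j :=
  prod_dvd_prod_of_subset _ _ _ (range_subset_range.2 (by omega))

lemma q_mono (hd : ∀ i, 0 < d i) {i j : ℕ} (h : i ≤ j) : q d i ≤ q d j :=
  Nat.le_of_dvd (q_pos hd j) (q_dvd_q h)

lemma q_strictMono (hd0 : d 0 = 1) (hd : ∀ j, 1 ≤ j → 2 ≤ d j) : StrictMono (q d) :=
  strictMono_nat_of_lt_succ fun j => by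
    have := q_pos (d_pos hd0 hd) j
    have := hd (j + 1) (by omega)
    rw [q_succ]
    nlinarith

lemma lt_q_self (hd0 : d 0 = 1) (hd : ∀ j, 1 ≤ j → 2 ≤ d j) (n : ℕ) : n < q d n := by
  simpa [q_zero hd0] using (q_strictMono hd0 hd).add_le_nat n 0

lemma digit_succ_eq_zero_of_lt {a j : ℕ} (h : a < q d j) : digit d a (j + 1) = 0 := by
  simp [digit, Nat.div_eq_of_lt h]

lemma digit_eq_zero_of_q_dvd (hd : ∀ i, 0 < d i) {a j : ℕ} (hj : 0 < j) (h : q d j ∣ a) :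
    digit d a j = 0 := by
  obtain ⟨i, rfl⟩ : ∃ i, j = i + 1 := ⟨j - 1, by omega⟩
  obtain ⟨k, rfl⟩ := h
  simp [digit, q_succ, mul_assoc, Nat.mul_div_cancel_left _ (q_pos hd i)]

lemma digit_eq_of_div_q_eq {a b r j : ℕ} (hrj : r < j) (h : a / q d r = b / q d r) :
    digit d a j = digit d b j := by
  obtain ⟨k, hk⟩ := q_dvd_q (d := d) (show r ≤ j - 1 by omega)
  simp only [digit, hk, ← Nat.div_div_eq_div_mul, h]

lemma succ_eq_q_mul {n j : ℕ} (h : q d j ∣ n + 1) : n + 1 = q d j * (n / q d j + 1) := by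
  rw [← Nat.succ_div_of_dvd h, Nat.mul_div_cancel' h]

lemma q_succ_dvd_succ_iff (hd : ∀ i, 0 < d i) {n j : ℕ} (h : q d j ∣ n + 1) :
    q d (j + 1) ∣ n + 1 ↔ digit d n (j + 1) = d (j + 1) - 1 := by
  rw [succ_eq_q_mul h, q_succ, Nat.mul_dvd_mul_iff_left (q_pos hd j), Nat.dvd_iff_mod_eq_zero,
    add_one_mod_eq_ite (hd _)]
  simp only [digit, Nat.add_sub_cancel]
  split_ifs <;> simp_all

lemma zeta_spec (hd0 : d 0 = 1) (hd : ∀ j, 1 ≤ j → 2 ≤ d j) (n : ℕ) :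
    1 ≤ zeta d n ∧ digit d n (zeta d n) ≠ d (zeta d n) - 1 := by
  have hne : {j | 1 ≤ j ∧ digit d n j ≠ d j - 1}.Nonempty := by
    refine ⟨n + 1, by omega, ?_⟩
    rw [digit_succ_eq_zero_of_lt (lt_q_self hd0 hd n)]
    have := hd (n + 1) (by omega)
    omega
  exact Nat.sInf_mem hne

lemma digit_of_lt_zeta {n j : ℕ} (hj : 1 ≤ j) (h : j < zeta d n) : digit d n j = d j - 1 := by
  by_contra hne
  exact Nat.notMem_of_lt_sInf h ⟨hj, hne⟩

lemma q_dvd_succ_iff (hd0 : d 0 = 1) (hd : ∀ j, 1 ≤ j → 2 ≤ d j) {n r : ℕ} :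
    q d r ∣ n + 1 ↔ r < zeta d n := by
  have hpos := d_pos hd0 hd
  constructor
  · intro h
    by_contra! hle
    obtain ⟨hz1, hz⟩ := zeta_spec hd0 hd n
    obtain ⟨k, hk⟩ : ∃ k, zeta d n = k + 1 := ⟨_, (Nat.sub_add_cancel hz1).symm⟩
    rw [hk] at hz hle
    have hk1 : q d (k + 1) ∣ n + 1 := (q_dvd_q hle).trans h
    exact hz ((q_succ_dvd_succ_iff hpos ((q_dvd_q k.le_succ).trans hk1)).1 hk1)
  · intro h
    induction r with
    | zero => simp [q_zero hd0]
    | succ r ih =>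
      exact (q_succ_dvd_succ_iff hpos (ih (by omega))).2 (digit_of_lt_zeta (by omega) h)

lemma zeta_le (hd0 : d 0 = 1) (hd : ∀ j, 1 ≤ j → 2 ≤ d j) (n : ℕ) : zeta d n ≤ n + 1 := by
  have h := (q_dvd_succ_iff hd0 hd).2 (Nat.sub_one_lt_of_lt (zeta_spec hd0 hd n).1)
  have := lt_q_self hd0 hd (zeta d n - 1)
  have := Nat.le_of_dvd (by omega) h
  omega

lemma digit_succ_zeta (hd0 : d 0 = 1) (hd : ∀ j, 1 ≤ j → 2 ≤ d j) (n : ℕ) :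
    digit d (n + 1) (zeta d n) = digit d n (zeta d n) + 1 := by
  obtain ⟨hz1, hz⟩ := zeta_spec hd0 hd n
  have hdvd : q d (zeta d n - 1) ∣ n + 1 := (q_dvd_succ_iff hd0 hd).2 (by omega)
  simp only [digit] at hz ⊢
  rw [Nat.succ_div_of_dvd hdvd, add_one_mod_eq_ite (d_pos hd0 hd _), if_neg hz]

lemma digit_succ_of_zeta_lt (hd0 : d 0 = 1) (hd : ∀ j, 1 ≤ j → 2 ≤ d j) {n j : ℕ}
    (h : zeta d n < j) : digit d (n + 1) j = digit d n j :=
  digit_eq_of_div_q_eq h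
    (Nat.succ_div_of_not_dvd fun hdvd => lt_irrefl _ ((q_dvd_succ_iff hd0 hd).1 hdvd))

lemma succ_sub_q_eq (hd0 : d 0 = 1) (hd : ∀ j, 1 ≤ j → 2 ≤ d j) {n r : ℕ} (hr : r < zeta d n) :
    n + 1 - q d r = q d r * (n / q d r) := by
  have := succ_eq_q_mul ((q_dvd_succ_iff hd0 hd).2 hr)
  rw [mul_add_one] at this
  omega

lemma sum_Icc_pred_mul_q (hd0 : d 0 = 1) (hd : ∀ i, 0 < d i) (r : ℕ) :
    ∑ j ∈ Icc 1 r, (d j - 1) * q d (j - 1) + 1 = q d r := by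
  induction r with
  | zero => simp [q_zero hd0]
  | succ r ih =>
    rw [sum_Icc_succ_top (by omega), Nat.add_sub_cancel, add_right_comm, ih, q_succ,
      Nat.sub_one_mul]
    have := Nat.le_mul_of_pos_left (q d r) (hd (r + 1))
    rw [Nat.mul_comm (q d r)]
    omega

end Cantor

section AddingMachine

variable {d : ℕ → ℕ} {p : ℕ → ℝ}

lemma s_succ (n : ℕ) : s d p n (n + 1) = ∏ j ∈ Icc 1 (zeta d n), p j := by simp [s]

lemma s_succ_sub_q (hd0 : d 0 = 1) (hd : ∀ j, 1 ≤ j → 2 ≤ d j) {n r : ℕ} (hr : r < zeta d n) :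
    s d p n (n + 1 - q d r) = (1 - p (r + 1)) * ∏ j ∈ Icc 1 r, p j := by
  have hsum := sum_Icc_pred_mul_q hd0 (d_pos hd0 hd)
  have hqle : q d r ≤ n + 1 := Nat.le_of_dvd (by omega) ((q_dvd_succ_iff hd0 hd).2 hr)
  rcases Nat.eq_zero_or_pos r with rfl | hr1
  · simp [s, q_zero hd0]
  have hq1 : 1 < q d r := q_zero hd0 ▸ q_strictMono hd0 hd hr1
  have hex : ∃ r', 1 ≤ r' ∧ r' + 1 ≤ zeta d n ∧
      n = n + 1 - q d r + ∑ j ∈ Icc 1 r', (d j - 1) * q d (j - 1) :=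
    ⟨r, hr1, hr, by have := hsum r; omega⟩
  rw [s, if_neg (by omega), if_neg (by omega), dif_pos hex]
  have hchoose : hex.choose = r := by
    refine (q_strictMono hd0 hd).injective ?_
    have := hex.choose_spec.2.2
    have := hsum hex.choose
    have := hsum r
    omega
  rw [hchoose]

lemma s_eq_zero (hd0 : d 0 = 1) (hd : ∀ j, 1 ≤ j → 2 ≤ d j) {n m : ℕ} (h1 : m ≠ n + 1)
    (h2 : ∀ r < zeta d n, m ≠ n + 1 - q d r) : s d p n m = 0 := by
  have h0 : m ≠ n := by simpa [q_zero hd0] using h2 0 (zeta_spec hd0 hd n).1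
  rw [s, if_neg h1, if_neg h0, dif_neg]
  rintro ⟨r, -, hr, hn⟩
  have := sum_Icc_pred_mul_q hd0 (d_pos hd0 hd) r
  exact h2 r (by omega) (by omega)

variable (d p) in
/-- `(S w)(n)` written out; the term `r = 0` of the sum is the diagonal entry `s(n, n) = 1 - p₁`. -/
def sMulVec (w : ℕ → ℂ) (n : ℕ) : ℂ :=
  (∏ j ∈ Icc 1 (zeta d n), (p j : ℂ)) * w (n + 1) +
    ∑ r ∈ range (zeta d n), (1 - (p (r + 1) : ℂ)) * (∏ j ∈ Icc 1 r, (p j : ℂ)) * w (n + 1 - q d r)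

lemma tsum_s_mul_eq_sMulVec (hd0 : d 0 = 1) (hd : ∀ j, 1 ≤ j → 2 ≤ d j) (w : ℕ → ℂ) (n : ℕ) :
    ∑' m, (s d p n m : ℂ) * w m = sMulVec d p w n := by
  have hqle : ∀ r ∈ range (zeta d n), 1 ≤ q d r ∧ q d r ≤ n + 1 := fun r hr =>
    ⟨q_pos (d_pos hd0 hd) r,
      Nat.le_of_dvd (by omega) ((q_dvd_succ_iff hd0 hd).2 (mem_range.1 hr))⟩
  set F := (range (zeta d n)).image (fun r => n + 1 - q d r)
  have hinj : Set.InjOn (fun r => n + 1 - q d r) (range (zeta d n)) := fun r hr r' hr' h => by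
    have := hqle r hr
    have := hqle r' hr'
    exact (q_strictMono hd0 hd).injective (by simp only at h; omega)
  have hnotMem : n + 1 ∉ F := by
    simp only [F, mem_image, not_exists, not_and]
    intro r hr
    have := hqle r hr
    omega
  have hzero : ∀ m ∉ insert (n + 1) F, (s d p n m : ℂ) * w m = 0 := by
    intro m hm
    simp only [F, mem_insert, mem_image, not_or, not_exists, not_and] at hm
    rw [s_eq_zero hd0 hd hm.1 fun r hr h => hm.2 r (mem_range.2 hr) h.symm, Complex.ofReal_zero,
      zero_mul]
  rw [tsum_eq_sum hzero, sum_insert hnotMem, sum_image hinj, s_succ, sMulVec]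
  congr 1
  · push_cast
    rfl
  · refine sum_congr rfl fun r hr => ?_
    rw [s_succ_sub_q hd0 hd (mem_range.1 hr)]
    push_cast
    rfl

lemma sMulVec_const_mul (c : ℂ) (w : ℕ → ℂ) (n : ℕ) :
    sMulVec d p (fun m => c * w m) n = c * sMulVec d p w n := by
  simp only [sMulVec, mul_add, mul_sum]
  ring_nf

/-- Since `s(n, n + 1) = p₁ ⋯ p_{ζ_n} ≠ 0`, row `n` of the eigenvalue equation determines
`w (n + 1)` from earlier values. -/
lemma eq_of_sMulVec_eq (hd : ∀ i, 0 < d i) (hp : ∀ j, 1 ≤ j → p j ≠ 0) {lam : ℂ} {w u : ℕ → ℂ}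
    (hw : ∀ n, sMulVec d p w n = lam * w n) (hu : ∀ n, sMulVec d p u n = lam * u n)
    (h0 : w 0 = u 0) : w = u := by
  funext n
  induction n using Nat.strong_induction_on with
  | _ n ih =>
  rcases n with _ | n
  · exact h0
  have hP : (∏ j ∈ Icc 1 (zeta d n), (p j : ℂ)) ≠ 0 :=
    prod_ne_zero_iff.2 fun j hj => Complex.ofReal_ne_zero.2 (hp j (mem_Icc.1 hj).1)
  have hsum : ∀ r ∈ range (zeta d n), w (n + 1 - q d r) = u (n + 1 - q d r) := fun r _ =>
    ih _ (by have := q_pos hd r; omega)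
  have hwn := hw n
  have hun := hu n
  rw [sMulVec, sum_congr rfl fun r hr => by rw [hsum r hr], ih n n.lt_succ_self] at hwn
  rw [sMulVec] at hun
  exact mul_left_cancel₀ hP (by linear_combination hwn - hun)

end AddingMachine

section Eigenvector

variable {d : ℕ → ℕ} {p : ℕ → ℝ} (lam : ℂ)

lemma iota_spec {r : ℕ} (hp : p r ≠ 0) :
    (p r : ℂ) * iota d p lam r + (1 - p r) = ftil d p (r - 1) lam := by
  have : (p r : ℂ) ≠ 0 := Complex.ofReal_ne_zero.2 hp
  rw [iota]
  field_simp
  ring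

lemma ftil_succ (k : ℕ) : ftil d p (k + 1) lam = iota d p lam (k + 1) ^ d (k + 1) := rfl

/-- The eigenvalue equation for `v_λ` at any `n` with `ζ_n = k + 1`, divided by the factor
`∏_{j > k} ι_λ(j) ^ a_j(n)` common to all the terms. -/
lemma iota_eigen_identity (hd : ∀ i, 0 < d i) (hp : ∀ j, 1 ≤ j → p j ≠ 0) (k : ℕ) :
    (∏ j ∈ Icc 1 (k + 1), (p j : ℂ)) * iota d p lam (k + 1) +
      ∑ r ∈ range (k + 1), (1 - (p (r + 1) : ℂ)) * (∏ j ∈ Icc 1 r, (p j : ℂ)) *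
        ∏ j ∈ Ioc r k, iota d p lam j ^ (d j - 1)
      = lam * ∏ j ∈ Ioc 0 k, iota d p lam j ^ (d j - 1) := by
  induction k with
  | zero => simpa [ftil] using iota_spec lam (hp 1 le_rfl)
  | succ k ih =>
    have hsum : ∑ r ∈ range (k + 1), (1 - (p (r + 1) : ℂ)) * (∏ j ∈ Icc 1 r, (p j : ℂ)) *
          ∏ j ∈ Ioc r (k + 1), iota d p lam j ^ (d j - 1)
        = (∑ r ∈ range (k + 1), (1 - (p (r + 1) : ℂ)) * (∏ j ∈ Icc 1 r, (p j : ℂ)) *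
          ∏ j ∈ Ioc r k, iota d p lam j ^ (d j - 1)) * iota d p lam (k + 1) ^ (d (k + 1) - 1) := by
      rw [sum_mul]
      refine sum_congr rfl fun r hr => ?_
      rw [prod_Ioc_succ_top (by simpa [Nat.lt_succ_iff] using hr)]
      ring
    rw [sum_range_succ, Ioc_self, prod_empty, mul_one, hsum, prod_Icc_succ_top (by omega),
      prod_Ioc_succ_top (Nat.zero_le k)]
    set P := ∏ j ∈ Icc 1 (k + 1), (p j : ℂ)
    set X := iota d p lam (k + 1) ^ (d (k + 1) - 1)
    have hX : X * iota d p lam (k + 1) = ftil d p (k + 1) lam := by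
      rw [ftil_succ, pow_sub_one_mul (hd _).ne']
    have hspec := iota_spec (d := d) lam (hp (k + 2) (by omega))
    rw [show k + 2 - 1 = k + 1 by omega] at hspec
    linear_combination X * ih + P * hspec - P * hX

lemma vlam_zero : vlam d p lam 0 = 1 := by simp [vlam, digit]

lemma vlam_eq_prod (hd : ∀ i, 0 < d i) {n N : ℕ} (h : n < q d N) :
    vlam d p lam n = ∏ j ∈ Ioc 0 N, iota d p lam j ^ digit d n j := by
  rw [vlam, ← prod_range_succ_eq_prod_Ioc]
  refine finprod_eq_prod_of_mulSupport_subset _ fun r hr => mem_range.2 (not_le.1 fun hNr => ?_)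
  rw [Function.mem_mulSupport, digit_succ_eq_zero_of_lt (h.trans_le (q_mono hd hNr)),
    pow_zero] at hr
  exact hr rfl

lemma vlam_succ_sub_q (hd0 : d 0 = 1) (hd : ∀ j, 1 ≤ j → 2 ≤ d j) {n r : ℕ}
    (hr : r < zeta d n) :
    vlam d p lam (n + 1 - q d r) = ∏ j ∈ Ioc r (n + 1), iota d p lam j ^ digit d n j := by
  have hpos := d_pos hd0 hd
  have heq := succ_sub_q_eq hd0 hd hr
  have hrn : r ≤ n + 1 := (hr.trans_le (zeta_le hd0 hd n)).le
  rw [vlam_eq_prod lam hpos (N := n + 1) (by have := lt_q_self hd0 hd (n + 1); omega),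
    ← prod_Ioc_consecutive _ (Nat.zero_le r) hrn, prod_eq_one, one_mul]
  · refine prod_congr rfl fun j hj => ?_
    rw [digit_eq_of_div_q_eq (a := n + 1 - q d r) (b := n) (mem_Ioc.1 hj).1
      (by rw [heq, Nat.mul_div_cancel_left _ (q_pos hpos r)])]
  · intro j hj
    obtain ⟨hj0, hjr⟩ := mem_Ioc.1 hj
    rw [digit_eq_zero_of_q_dvd hpos hj0 ((q_dvd_q hjr).trans (heq ▸ dvd_mul_right _ _)),
      pow_zero]

lemma vlam_succ (hd0 : d 0 = 1) (hd : ∀ j, 1 ≤ j → 2 ≤ d j) {n k : ℕ} (hk : zeta d n = k + 1) :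
    vlam d p lam (n + 1)
      = iota d p lam (k + 1) * ∏ j ∈ Ioc k (n + 1), iota d p lam j ^ digit d n j := by
  have hkn : k + 1 ≤ n + 1 := hk ▸ zeta_le hd0 hd n
  rw [vlam_eq_prod lam (d_pos hd0 hd) (lt_q_self hd0 hd (n + 1)),
    ← prod_Ioc_consecutive _ (Nat.zero_le k) (by omega : k ≤ n + 1),
    ← prod_Ioc_consecutive _ k.le_succ hkn, ← prod_Ioc_consecutive _ k.le_succ hkn,
    Nat.Ioc_succ_singleton, prod_singleton, prod_singleton, prod_eq_one, one_mul,
    ← hk, digit_succ_zeta hd0 hd, pow_succ, mul_comm _ (iota d p lam _), mul_assoc]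
  · congr 2
    refine prod_congr rfl fun j hj => ?_
    rw [digit_succ_of_zeta_lt hd0 hd (by have := (mem_Ioc.1 hj).1; omega)]
  · intro j hj
    obtain ⟨hj0, hjk⟩ := mem_Ioc.1 hj
    rw [digit_eq_zero_of_q_dvd (d_pos hd0 hd) hj0 ((q_dvd_succ_iff hd0 hd).2 (by omega)),
      pow_zero]

lemma prod_Ioc_pow_digit_split {M : Type*} [CommMonoid M] (x : ℕ → M) {n k r N : ℕ}
    (hk : zeta d n = k + 1) (hrk : r ≤ k) (hkN : k ≤ N) :
    ∏ j ∈ Ioc r N, x j ^ digit d n j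
      = (∏ j ∈ Ioc r k, x j ^ (d j - 1)) * ∏ j ∈ Ioc k N, x j ^ digit d n j := by
  rw [← prod_Ioc_consecutive _ hrk hkN]
  congr 1
  refine prod_congr rfl fun j hj => ?_
  obtain ⟨hrj, hjk⟩ := mem_Ioc.1 hj
  rw [digit_of_lt_zeta (by omega) (by omega)]

lemma sMulVec_vlam (hd0 : d 0 = 1) (hd : ∀ j, 1 ≤ j → 2 ≤ d j) (hp : ∀ j, 1 ≤ j → p j ≠ 0)
    (n : ℕ) : sMulVec d p (vlam d p lam) n = lam * vlam d p lam n := by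
  obtain ⟨k, hk⟩ : ∃ k, zeta d n = k + 1 := ⟨_, (Nat.sub_add_cancel (zeta_spec hd0 hd n).1).symm⟩
  have hkn : k ≤ n + 1 := by have := zeta_le hd0 hd n; omega
  set W := ∏ j ∈ Ioc k (n + 1), iota d p lam j ^ digit d n j
  have hsub : ∀ r ∈ range (k + 1),
      vlam d p lam (n + 1 - q d r) = (∏ j ∈ Ioc r k, iota d p lam j ^ (d j - 1)) * W :=
    fun r hr => by
      rw [vlam_succ_sub_q lam hd0 hd (hk ▸ mem_range.1 hr),
        prod_Ioc_pow_digit_split _ hk (Nat.lt_succ_iff.1 (mem_range.1 hr)) hkn]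
  have hn : vlam d p lam n = (∏ j ∈ Ioc 0 k, iota d p lam j ^ (d j - 1)) * W := by
    simpa [q_zero hd0] using hsub 0 (by simp)
  rw [sMulVec, hk, vlam_succ lam hd0 hd hk,
    sum_congr rfl fun r hr => by rw [hsub r hr, ← mul_assoc], ← sum_mul, hn]
  linear_combination W * iota_eigen_identity lam (d_pos hd0 hd) hp k

end Eigenvector

theorem stmt3_general (d : ℕ → ℕ) (p : ℕ → ℝ)
    (hd0 : d 0 = 1) (hd : ∀ j, 1 ≤ j → 2 ≤ d j)
    (hp : ∀ j, 1 ≤ j → p j ∈ Set.Ioc (0 : ℝ) 1)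
    (lam : ℂ) (v : ℕ → ℂ) :
    (∀ n, ∑' m : ℕ, (s d p n m : ℂ) * v m = lam * v n) ↔
      ∀ n, v n = v 0 * vlam d p lam n := by
  have hp0 : ∀ j, 1 ≤ j → p j ≠ 0 := fun j hj => (hp j hj).1.ne'
  have hvlam : ∀ n, sMulVec d p (fun m => v 0 * vlam d p lam m) n = lam * (v 0 * vlam d p lam n) :=
    fun n => by rw [sMulVec_const_mul, sMulVec_vlam lam hd0 hd hp0, mul_left_comm]
  simp only [tsum_s_mul_eq_sMulVec hd0 hd]
  constructor
  · intro h
    exact congrFun (eq_of_sMulVec_eq (d_pos hd0 hd) hp0 h hvlam (by simp [vlam_zero]))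
  · intro h n
    rw [show v = fun m => v 0 * vlam d p lam m from funext h]
    exact hvlam n

/-- a bounded sequence `v` satisfies the eigenvalue equation for `λ`
iff `v n = v 0 * v_λ(n)` for every `n`. -/
theorem stmt3 (d : ℕ → ℕ) (p : ℕ → ℝ)
    (hd0 : d 0 = 1) (hd : ∀ j, 1 ≤ j → 2 ≤ d j)
    (hp : ∀ j, 1 ≤ j → p j ∈ Set.Ioc (0 : ℝ) 1)
    (lam : ℂ) (v : ℕ → ℂ) (hv : ∃ C : ℝ, ∀ n, ‖v n‖ ≤ C) :
    (∀ n, ∑' m : ℕ, (s d p n m : ℂ) * v m = lam * v n) ↔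
      ∀ n, v n = v 0 * vlam d p lam n :=
  stmt3_general d p hd0 hd hp lam v

end AMFC
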